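/- The minimum-safety Bellman operator T, defined on bounded functions Q : S × A → ℝ by (T Q)(s,a) = γ·min(c(s,a), sup_{a'} Q(f(s,a), a')) + (1−γ)·c(s,a) for a deterministic transition function f, a bounded cost c, and discount γ ∈ [0,1), is a γ-contraction in the supremum norm. -/
import Mathlib


/-- The minimum-safety Bellman operator:
`(T Q)(s,a) = γ·min(c(s,a), sup_{a'} Q(f(s,a), a')) + (1−γ)·c(s,a)`. -/
noncomputable def minSafetyBellman {S A : Type*} [Fintype A] [Nonempty A]
    (f : S × A → S) (c : S × A → ℝ) (γ : ℝ) (Q : S × A → ℝ) : S × A → ℝ :=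
  fun p => γ * min (c p) (⨆ a' : A, Q (f p, a')) + (1 - γ) * c p

/-- The minimum-safety Bellman operator is a `γ`-contraction in the sup norm
on bounded functions `Q : S × A → ℝ`. -/
theorem minSafetyBellman_contraction {S A : Type*} [Nonempty S] [Fintype A] [Nonempty A]
    (f : S × A → S) (c : S × A → ℝ) (M : ℝ) (hc : ∀ p, |c p| ≤ M)
    (γ : ℝ) (hγ0 : 0 ≤ γ) (hγ1 : γ < 1)
    (Q₁ Q₂ : S × A → ℝ)
    (M₁ : ℝ) (hQ₁ : ∀ p, |Q₁ p| ≤ M₁)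
    (M₂ : ℝ) (hQ₂ : ∀ p, |Q₂ p| ≤ M₂) :
    (⨆ p : S × A, |minSafetyBellman f c γ Q₁ p - minSafetyBellman f c γ Q₂ p|) ≤
      γ * ⨆ p : S × A, |Q₁ p - Q₂ p| := by
  set D := ⨆ p : S × A, |Q₁ p - Q₂ p| with hD
  have hbdd : BddAbove (Set.range fun p : S × A => |Q₁ p - Q₂ p|) := by
    refine ⟨M₁ + M₂, ?_⟩
    rintro x ⟨p, rfl⟩
    calc |Q₁ p - Q₂ p| ≤ |Q₁ p| + |Q₂ p| := abs_sub _ _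
    _ ≤ M₁ + M₂ := add_le_add (hQ₁ p) (hQ₂ p)
  have hle : ∀ p, |Q₁ p - Q₂ p| ≤ D := fun p => le_ciSup hbdd p
  have hD0 : 0 ≤ D := le_trans (abs_nonneg _) (hle Classical.ofNonempty)
  refine ciSup_le fun p => ?_
  have key : |(⨆ a' : A, Q₁ (f p, a')) - ⨆ a' : A, Q₂ (f p, a')| ≤ D := by
    rw [abs_sub_le_iff]
    constructor
    · rw [sub_le_iff_le_add]
      refine ciSup_le fun a' => ?_
      have := hle (f p, a')
      have h2 : Q₂ (f p, a') ≤ ⨆ a' : A, Q₂ (f p, a') :=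
        le_ciSup (f := fun a' : A => Q₂ (f p, a')) (Set.finite_range _).bddAbove a'
      have := abs_le.mp this; linarith [this.2]
    · rw [sub_le_iff_le_add]
      refine ciSup_le fun a' => ?_
      have := hle (f p, a')
      have h2 : Q₁ (f p, a') ≤ ⨆ a' : A, Q₁ (f p, a') :=
        le_ciSup (f := fun a' : A => Q₁ (f p, a')) (Set.finite_range _).bddAbove a'
      have := abs_le.mp this; linarith [this.1]
  have hmin : |min (c p) (⨆ a' : A, Q₁ (f p, a')) -
      min (c p) (⨆ a' : A, Q₂ (f p, a'))| ≤ D :=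
    le_trans (abs_min_sub_min_le_max _ _ _ _)
      (max_le (by simpa using hD0) key)
  calc |minSafetyBellman f c γ Q₁ p - minSafetyBellman f c γ Q₂ p|
      = γ * |min (c p) (⨆ a' : A, Q₁ (f p, a')) -
          min (c p) (⨆ a' : A, Q₂ (f p, a'))| := by
        simp only [minSafetyBellman]
        rw [show γ * min (c p) (⨆ a' : A, Q₁ (f p, a')) + (1 - γ) * c p -
          (γ * min (c p) (⨆ a' : A, Q₂ (f p, a')) + (1 - γ) * c p) =
          γ * (min (c p) (⨆ a' : A, Q₁ (f p, a')) -
            min (c p) (⨆ a' : A, Q₂ (f p, a'))) from by ring,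
          abs_mul, abs_of_nonneg hγ0]
    _ ≤ γ * D := mul_le_mul_of_nonneg_left hmin hγ0
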